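/- arXiv:2111.14930 — 6 statements merged into one kernel-verified Lean document; each statement's English description precedes it below -/
import Mathlib

section
/- Let X be a Hilbert C*-module over a C*-algebra A, and let x, y ∈ X. If ‖xa + y‖ ≥ ‖xa‖ for all a ∈ A, then ⟨x, y⟩ = 0. -/
open scoped RightActions
/-- The definition of `CStarModule` in the Mathlib of December 2024: a right `A`-module
(via `Aᵐᵒᵖ`), with `⟪x, y <• a⟫ = ⟪x, y⟫ * a`. -/
class CStarModuleRight (A E : Type*) [NonUnitalSemiring A] [StarRing A]
    [Module ℂ A] [AddCommGroup E] [Module ℂ E] [PartialOrder A] [SMul Aᵐᵒᵖ E] [Norm A] [Norm E]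
    extends Inner A E where
  inner_add_right {x} {y} {z} : inner x (y + z) = inner x y + inner x z
  inner_self_nonneg {x} : 0 ≤ inner x x
  inner_self {x} : inner x x = 0 ↔ x = 0
  inner_op_smul_right {a : A} {x y : E} : inner x (y <• a) = inner x y * a
  inner_smul_right_complex {z : ℂ} {x} {y} : inner x (z • y) = z • inner x y
  star_inner x y : star (inner x y) = inner y x
  norm_eq_sqrt_norm_inner_self x : ‖x‖ = √‖inner x x‖

namespace CStarModuleRight

section
variable {A E : Type*} [CStarAlgebra A] [PartialOrder A]
    [NormedAddCommGroup E] [NormedSpace ℂ E] [Module Aᵐᵒᵖ E] [CStarModuleRight A E]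

@[simp]
lemma inner_zero_right' {x : E} : inner A x (0 : E) = 0 := by
  have h := inner_add_right (A := A) (x := x) (y := (0 : E)) (z := 0)
  simp only [add_zero] at h
  exact (left_eq_add.mp h)

@[simp]
lemma inner_zero_left' {x : E} : inner A (0 : E) x = 0 := by
  rw [← star_inner, inner_zero_right', star_zero]

lemma inner_add_left {x y z : E} : inner A (x + y) z = inner A x z + inner A y z := by
  rw [← star_inner, inner_add_right, star_add, star_inner, star_inner]

lemma inner_op_smul_left {a : A} {x y : E} : inner A (x <• a) y = star a * inner A x y := by
  rw [← star_inner, inner_op_smul_right, star_mul, star_inner]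

lemma isSelfAdjoint_inner_self {x : E} : IsSelfAdjoint (inner A x x) := star_inner (A := A) x x

lemma norm_sq_eq (x : E) : ‖x‖ ^ 2 = ‖inner A x x‖ := by
  rw [norm_eq_sqrt_norm_inner_self (A := A), Real.sq_sqrt (norm_nonneg _)]

end

lemma norm_nonneg {A E : Type*} [CStarAlgebra A] [PartialOrder A]
    [NormedAddCommGroup E] [NormedSpace ℂ E] [Module Aᵐᵒᵖ E] [CStarModuleRight A E]
    {x : E} : 0 ≤ ‖x‖ := _root_.norm_nonneg x

end CStarModuleRight

open CStarModuleRight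

/-- If `‖xa + y‖ ≥ ‖xa‖` for all `a ∈ A`, then `⟨x, y⟩ = 0`. -/
theorem stmt_0 {A E : Type*} [CStarAlgebra A] [PartialOrder A] [StarOrderedRing A]
    [NormedAddCommGroup E] [NormedSpace ℂ E] [CompleteSpace E]
    [Module Aᵐᵒᵖ E] [CStarModuleRight A E] (x y : E)
    (h : ∀ a : A, ‖x <• a + y‖ ≥ ‖x <• a‖) :
    (inner A x y : A) = 0 := by
  by_cases hx : x = 0
  · simp [hx]
  have hxpos : (0:ℝ) < ‖x‖ := norm_pos_iff.mpr hx
  have hx2 : (0:ℝ) < ‖x‖^2 := by positivity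
  set b : A := inner A x y with hb
  set c : A := star b * (inner A x x : A) * b with hc
  have hcnn : (0:A) ≤ c := by
    have : (inner A (x <• b) (x <• b) : A) = c := by
      simp [hc, CStarModuleRight.inner_op_smul_left, CStarModuleRight.inner_op_smul_right, mul_assoc]
    rw [← this]; exact CStarModuleRight.inner_self_nonneg
  -- step A
  have hA : (inner A x x : A) ≤ algebraMap ℝ A (‖x‖^2) := by
    have h1 := IsSelfAdjoint.le_algebraMap_norm_self (a := (inner A x x : A))
      CStarModuleRight.isSelfAdjoint_inner_self
    rwa [← CStarModuleRight.norm_sq_eq] at h1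
  have hB : c ≤ ‖x‖^2 • (star b * b) := by
    have h1 := star_left_conjugate_le_conjugate hA b
    rwa [Algebra.algebraMap_eq_smul_one, mul_smul_comm, smul_mul_assoc, mul_one] at h1
  have key : ∀ t : ℝ, 2/‖x‖^2 ≤ t → 2*t*‖c‖ ≤ ‖x‖^2 * ‖y‖^2 := by
    intro t ht
    have ht0 : 0 < t := lt_of_lt_of_le (by positivity) ht
    set a : A := (-t) • b with ha
    have hsa : star a = (-t) • star b := by simp [ha]
    have e1 : (inner A (x <• a) (x <• a) : A) = (t^2) • c := by
      simp only [CStarModuleRight.inner_op_smul_left, CStarModuleRight.inner_op_smul_right, (show star ((-t) • b) = (-t) • star b from hsa), ha, hc,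
        smul_mul_assoc, mul_smul_comm, smul_smul, mul_assoc]
      rw [neg_mul_neg, ← pow_two]
    have e2 : (inner A (x <• a + y) (x <• a + y) : A)
        = (t^2) • c + ((-(2*t)) • (star b * b) + (inner A y y : A)) := by
      simp only [CStarModuleRight.inner_add_left, CStarModuleRight.inner_add_right,
        CStarModuleRight.inner_op_smul_left, CStarModuleRight.inner_op_smul_right, (show star ((-t) • b) = (-t) • star b from hsa), ha,
        add_mul, smul_mul_assoc, mul_smul_comm, smul_smul,
        mul_assoc, ← CStarModuleRight.star_inner x y, ← hb, hc]
      module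
    -- operator inequality
    have hstep : ((-(2*t)) • (star b * b) : A) ≤ (-(2*t/‖x‖^2)) • c := by
      have h1 : (2*t/‖x‖^2) • c ≤ (2*t/‖x‖^2) • (‖x‖^2 • (star b * b)) :=
        smul_le_smul_of_nonneg_left hB (by positivity)
      rw [smul_smul, div_mul_cancel₀ _ (ne_of_gt hx2)] at h1
      have := neg_le_neg h1
      rwa [← neg_smul, ← neg_smul] at this
    have hle : (inner A (x <• a + y) (x <• a + y) : A)
        ≤ (t^2 - 2*t/‖x‖^2) • c + (inner A y y : A) := by
      rw [e2, sub_smul]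
      have := add_le_add_right (add_le_add_left hstep (inner A y y : A)) ((t^2) • c)
      refine this.trans_eq ?_
      module
    have hcoef : (0:ℝ) ≤ t^2 - 2*t/‖x‖^2 := by
      have : 2/‖x‖^2 ≤ t := ht
      have h2 : 2*t/‖x‖^2 ≤ t*t := by
        rw [div_le_iff₀ hx2] at this ⊢
        calc 2*t = t*2 := by ring
        _ ≤ t*(t*‖x‖^2) := by nlinarith
        _ = t*t*‖x‖^2 := by ring
      nlinarith
    have hnorm : ‖(inner A (x <• a + y) (x <• a + y) : A)‖
        ≤ (t^2 - 2*t/‖x‖^2) * ‖c‖ + ‖y‖^2 := by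
      calc ‖(inner A (x <• a + y) (x <• a + y) : A)‖
          ≤ ‖(t^2 - 2*t/‖x‖^2) • c + (inner A y y : A)‖ :=
            CStarAlgebra.norm_le_norm_of_nonneg_of_le CStarModuleRight.inner_self_nonneg hle
        _ ≤ ‖(t^2 - 2*t/‖x‖^2) • c‖ + ‖(inner A y y : A)‖ := norm_add_le _ _
        _ = (t^2 - 2*t/‖x‖^2) * ‖c‖ + ‖y‖^2 := by
            rw [norm_smul, Real.norm_of_nonneg hcoef, ← CStarModuleRight.norm_sq_eq]
    have hsq : t^2 * ‖c‖ ≤ ‖(inner A (x <• a + y) (x <• a + y) : A)‖ := by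
      have h1 := h a
      have h2 : ‖x <• a‖^2 ≤ ‖x <• a + y‖^2 := by
        have := CStarModuleRight.norm_nonneg (A := A) (x := x <• a)
        nlinarith [h1]
      rw [CStarModuleRight.norm_sq_eq (A := A), CStarModuleRight.norm_sq_eq (A := A), e1, norm_smul, Real.norm_of_nonneg (by positivity : (0:ℝ) ≤ t^2)] at h2
      exact h2
    have : 2*t/‖x‖^2 * ‖c‖ ≤ ‖y‖^2 := by nlinarith [hsq.trans hnorm]
    rw [div_mul_eq_mul_div, div_le_iff₀ hx2] at this
    nlinarith [this]
  -- conclude ‖c‖ = 0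
  have hc0 : c = 0 := by
    rw [← norm_eq_zero]
    by_contra h0
    have hcpos : 0 < ‖c‖ := (norm_nonneg c).lt_of_ne (Ne.symm h0)
    set t := max (2/‖x‖^2) ((‖x‖^2 * ‖y‖^2 + 1)/(2*‖c‖)) with htdef
    have h1 := key t (le_max_left _ _)
    have h2 : (‖x‖^2 * ‖y‖^2 + 1)/(2*‖c‖) ≤ t := le_max_right _ _
    rw [div_le_iff₀ (by positivity)] at h2
    nlinarith
  have hxb : x <• b = 0 := by
    have : (inner A (x <• b) (x <• b) : A) = c := by
      simp [hc, CStarModuleRight.inner_op_smul_left, CStarModuleRight.inner_op_smul_right, mul_assoc]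
    rw [← CStarModuleRight.inner_self (A := A), this, hc0]
  have hbb : star b * b = 0 := by
    have : (inner A (x <• b) y : A) = star b * b := by
      simp [CStarModuleRight.inner_op_smul_left, ← hb]
    rw [hxb] at this
    simpa using this.symm
  exact (CStarRing.star_mul_self_eq_zero_iff b).mp hbb
end

section
/- Let X be a Hilbert C*-module over a C*-algebra A, and let x, y ∈ X. Then ⟨x, y⟩ = 0 if and only if ‖xa + y‖ ≥ ‖xa‖ for all a ∈ A. -/
open scoped RightActions

/-- The Mathlib (December 2024) definition of a Hilbert C⋆-module, with a right `A`-action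
(Mathlib's `CStarModule` now uses a left action). -/
class RightCStarModule (A E : Type*) [NonUnitalSemiring A] [StarRing A]
    [Module ℂ A] [AddCommGroup E] [Module ℂ E] [PartialOrder A] [SMul Aᵐᵒᵖ E] [Norm A] [Norm E]
    extends Inner A E where
  inner_add_right {x} {y} {z} : inner x (y + z) = inner x y + inner x z
  inner_self_nonneg {x} : 0 ≤ inner x x
  inner_self {x} : inner x x = 0 ↔ x = 0
  inner_op_smul_right {a : A} {x y : E} : inner x (y <• a) = inner x y * a
  inner_smul_right_complex {z : ℂ} {x} {y} : inner x (z • y) = z • inner x y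
  star_inner x y : star (inner x y) = inner y x
  norm_eq_sqrt_norm_inner_self x : ‖x‖ = √‖inner x x‖

namespace RightCStarModule

variable {A E : Type*} [CStarAlgebra A] [PartialOrder A] [StarOrderedRing A]
  [NormedAddCommGroup E] [NormedSpace ℂ E] [Module Aᵐᵒᵖ E] [RightCStarModule A E]

lemma inner_add_left {x y z : E} : inner A (x + y) z = inner A x z + inner A y z := by
  rw [← star_star (r := inner A (x + y) z)]
  simp only [RightCStarModule.inner_add_right, star_add, RightCStarModule.star_inner]

lemma inner_op_smul_left {a : A} {x y : E} : inner A (x <• a) y = star a * inner A x y := by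
  rw [← RightCStarModule.star_inner (A := A) y (x <• a), RightCStarModule.inner_op_smul_right,
    star_mul, RightCStarModule.star_inner]

@[simp]
lemma inner_zero_left {y : E} : inner A (0 : E) y = 0 := by
  have h := inner_add_left (A := A) (x := (0 : E)) (y := 0) (z := y)
  rw [add_zero] at h
  exact (left_eq_add.mp h)

lemma inner_neg_right {x y : E} : inner A x (-y) = -inner A x y := by
  have h := RightCStarModule.inner_add_right (A := A) (x := x) (y := y) (z := -y)
  have h0 : inner A x (0 : E) = 0 := by
    rw [← RightCStarModule.star_inner, inner_zero_left, star_zero]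
  rw [add_neg_cancel, h0] at h
  exact (neg_eq_of_add_eq_zero_right h.symm).symm

lemma inner_neg_left {x y : E} : inner A (-x) y = -inner A x y := by
  rw [← RightCStarModule.star_inner (A := A) y (-x), inner_neg_right, star_neg,
    RightCStarModule.star_inner]

lemma inner_sub_right {x y z : E} : inner A x (y - z) = inner A x y - inner A x z := by
  rw [sub_eq_add_neg, RightCStarModule.inner_add_right, inner_neg_right, ← sub_eq_add_neg]

lemma inner_sub_left {x y z : E} : inner A (x - y) z = inner A x z - inner A y z := by
  rw [sub_eq_add_neg, inner_add_left, inner_neg_left, ← sub_eq_add_neg]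

lemma inner_smul_right_real {z : ℝ} {x y : E} : inner A x (z • y) = z • inner A x y := by
  have h₁ : z • y = (z : ℂ) • y := by simp
  rw [h₁, RightCStarModule.inner_smul_right_complex]
  simp

lemma inner_smul_left_real {z : ℝ} {x y : E} : inner A (z • x) y = z • inner A x y := by
  rw [← RightCStarModule.star_inner (A := A) y (z • x), inner_smul_right_real, star_smul,
    star_trivial, RightCStarModule.star_inner]

lemma norm_sq_eq {x : E} : ‖x‖ ^ 2 = ‖inner A x x‖ := by
  rw [RightCStarModule.norm_eq_sqrt_norm_inner_self (A := A), Real.sq_sqrt (norm_nonneg _)]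

lemma isSelfAdjoint_inner_self {x : E} : IsSelfAdjoint (inner A x x) :=
  RightCStarModule.star_inner _ _

lemma inner_mul_inner_swap_le {x y : E} :
    inner A y x * inner A x y ≤ ‖x‖ ^ 2 • inner A y y := by
  rcases eq_or_ne x 0 with h | h
  · simp [h]
  · have h₁ : ∀ (a : A),
        (0 : A) ≤ ‖x‖ ^ 2 • (star a * a) - ‖x‖ ^ 2 • (inner A y x * a)
                  - ‖x‖ ^ 2 • (star a * inner A x y) + ‖x‖ ^ 2 • (‖x‖ ^ 2 • inner A y y) := by
      intro a
      calc (0 : A) ≤ inner A (x <• a - ‖x‖ ^ 2 • y) (x <• a - ‖x‖ ^ 2 • y) := by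
                      exact RightCStarModule.inner_self_nonneg
            _ = star a * inner A x x * a - ‖x‖ ^ 2 • (inner A y x * a)
                  - ‖x‖ ^ 2 • (star a * inner A x y) + ‖x‖ ^ 2 • (‖x‖ ^ 2 • inner A y y) := by
                      simp only [inner_sub_right, RightCStarModule.inner_op_smul_right,
                        inner_sub_left, inner_op_smul_left, inner_smul_left_real,
                        inner_smul_right_real, smul_sub, sub_mul, smul_mul_assoc, mul_assoc,
                        mul_smul_comm]
                      abel
            _ ≤ ‖x‖ ^ 2 • (star a * a) - ‖x‖ ^ 2 • (inner A y x * a)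
                  - ‖x‖ ^ 2 • (star a * inner A x y) + ‖x‖ ^ 2 • (‖x‖ ^ 2 • inner A y y) := by
                      gcongr
                      calc _ ≤ ‖inner A x x‖ • (star a * a) :=
                          CStarAlgebra.star_left_conjugate_le_norm_smul isSelfAdjoint_inner_self
                        _ = ‖x‖ ^ 2 • (star a * a) := by rw [norm_sq_eq (A := A)]
    specialize h₁ (inner A x y)
    simp only [RightCStarModule.star_inner, sub_self, zero_sub, le_neg_add_iff_add_le,
      add_zero] at h₁
    rwa [smul_le_smul_iff_of_pos_left (pow_pos (norm_pos_iff.mpr h) _)] at h₁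

end RightCStarModule

/-- `⟨x, y⟩ = 0` iff `‖xa + y‖ ≥ ‖xa‖` for all `a ∈ A`. -/
theorem stmt_3 {A E : Type*} [CStarAlgebra A] [PartialOrder A] [StarOrderedRing A]
    [NormedAddCommGroup E] [NormedSpace ℂ E] [CompleteSpace E]
    [Module Aᵐᵒᵖ E] [RightCStarModule A E] (x y : E) :
    (inner A x y : A) = 0 ↔ ∀ a : A, ‖x <• a + y‖ ≥ ‖x <• a‖ := by
  set b : A := inner A x y with hb
  constructor
  · intro h a
    have hz : (inner A (x <• a + y) (x <• a + y) : A)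
        = inner A (x <• a) (x <• a) + inner A y y := by
      have h1 : (inner A (x <• a) y : A) = 0 := by
        rw [RightCStarModule.inner_op_smul_left, ← hb, h, mul_zero]
      have h2 : (inner A y (x <• a) : A) = 0 := by
        rw [← RightCStarModule.star_inner, h1, star_zero]
      rw [RightCStarModule.inner_add_right, RightCStarModule.inner_add_left,
        RightCStarModule.inner_add_left, h1, h2]
      abel
    have h1 : ‖x <• a‖ ^ 2 ≤ ‖x <• a + y‖ ^ 2 := by
      rw [RightCStarModule.norm_sq_eq (A := A), RightCStarModule.norm_sq_eq (A := A), hz]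
      exact CStarAlgebra.norm_le_norm_of_nonneg_of_le RightCStarModule.inner_self_nonneg
        (le_add_of_nonneg_right RightCStarModule.inner_self_nonneg)
    exact (pow_le_pow_iff_left₀ (norm_nonneg _) (norm_nonneg _) two_ne_zero).mp h1
  · intro h
    rcases eq_or_ne x 0 with hx | hx
    · simp [hb, hx]
    set c : A := star b * inner A x x * b with hc
    set d : A := star b * b with hd
    set e : A := (inner A y y : A) with he
    set K : ℝ := ‖x‖ ^ 2 with hKdef
    have hxn : 0 < ‖x‖ := norm_pos_iff.mpr hx
    have hK : (0:ℝ) < K := by rw [hKdef]; positivity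
    have hcd : c ≤ K • d := by
      have := CStarAlgebra.star_left_conjugate_le_norm_smul (a := b) (b := (inner A x x : A))
        RightCStarModule.isSelfAdjoint_inner_self
      rwa [← RightCStarModule.norm_sq_eq (A := A)] at this
    have hkey : ∀ t : ℝ, 2 / K ≤ t → 2 * t / K * ‖c‖ ≤ ‖e‖ := by
      intro t ht
      have ht0 : 0 < t := lt_of_lt_of_le (by positivity) ht
      set a : A := (-t) • b with ha
      have hsa : star a = (-t) • star b := by rw [ha, star_smul, star_trivial]
      have hinner1 : (inner A (x <• a) (x <• a) : A) = (t ^ 2) • c := by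
        rw [RightCStarModule.inner_op_smul_right, RightCStarModule.inner_op_smul_left, hsa, hc]
        rw [smul_mul_assoc, smul_mul_assoc, ha, mul_smul_comm, smul_smul]
        norm_num [pow_two]
      have h2 : (inner A (x <• a) y : A) = (-t) • d := by
        rw [RightCStarModule.inner_op_smul_left, hsa, ← hb, smul_mul_assoc, ← hd]
      have h3 : (inner A y (x <• a) : A) = (-t) • d := by
        rw [← RightCStarModule.star_inner, h2, star_smul, star_trivial, hd]
        rw [star_mul, star_star]
      have hinner2 : (inner A (x <• a + y) (x <• a + y) : A)
          = (t ^ 2) • c - (2 * t) • d + e := by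
        rw [RightCStarModule.inner_add_right, RightCStarModule.inner_add_left,
          RightCStarModule.inner_add_left, hinner1, h2, h3, ← he]
        module
      have hle : (inner A (x <• a + y) (x <• a + y) : A) ≤ (t^2 - 2*t/K) • c + e := by
        rw [hinner2]
        have hstep : (2 * t / K) • c ≤ (2 * t) • d := by
          calc (2 * t / K) • c ≤ (2 * t / K) • (K • d) :=
                smul_le_smul_of_nonneg_left hcd (by positivity)
            _ = (2 * t) • d := by rw [smul_smul]; congr 1; field_simp
        calc (t ^ 2) • c - (2 * t) • d + e ≤ (t ^ 2) • c - (2*t/K) • c + e := by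
              gcongr
          _ = (t^2 - 2*t/K) • c + e := by module
      have hs : 0 ≤ t^2 - 2*t/K := by
        rw [sub_nonneg, div_le_iff₀ hK] at *
        nlinarith
      have hnorm : t^2 * ‖c‖ ≤ (t^2 - 2*t/K) * ‖c‖ + ‖e‖ := by
        calc t^2 * ‖c‖ = ‖(t^2) • c‖ := by
              rw [norm_smul]; simp [abs_of_nonneg (sq_nonneg t)]
          _ = ‖x <• a‖ ^ 2 := by rw [RightCStarModule.norm_sq_eq (A := A), hinner1]
          _ ≤ ‖x <• a + y‖ ^ 2 := pow_le_pow_left₀ (norm_nonneg _) (h a) 2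
          _ = ‖(inner A (x <• a + y) (x <• a + y) : A)‖ := RightCStarModule.norm_sq_eq
          _ ≤ ‖(t^2 - 2*t/K) • c + e‖ :=
              CStarAlgebra.norm_le_norm_of_nonneg_of_le RightCStarModule.inner_self_nonneg hle
          _ ≤ ‖(t^2 - 2*t/K) • c‖ + ‖e‖ := norm_add_le _ _
          _ = (t^2 - 2*t/K) * ‖c‖ + ‖e‖ := by rw [norm_smul]; simp [abs_of_nonneg hs]
      nlinarith
    have hcz : c = 0 := by
      by_contra hcne
      have hcpos : 0 < ‖c‖ := norm_pos_iff.mpr hcne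
      have h1 := hkey (max (2 / K) (K * (‖e‖ + 1) / (2 * ‖c‖))) (le_max_left _ _)
      have h2 : K * (‖e‖ + 1) / (2 * ‖c‖) ≤ max (2 / K) (K * (‖e‖ + 1) / (2 * ‖c‖)) :=
        le_max_right _ _
      have hcontra : ‖e‖ + 1 ≤ ‖e‖ := by
        calc ‖e‖ + 1 = 2 * (K * (‖e‖ + 1) / (2 * ‖c‖)) / K * ‖c‖ := by
              field_simp
          _ ≤ 2 * max (2 / K) (K * (‖e‖ + 1) / (2 * ‖c‖)) / K * ‖c‖ := by gcongr
          _ ≤ ‖e‖ := h1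
      linarith
    have hswap : b * star b ≤ ‖y‖ ^ 2 • (inner A x x : A) := by
      have := RightCStarModule.inner_mul_inner_swap_le (A := A) (x := y) (y := x)
      rwa [← RightCStarModule.star_inner x y, ← hb] at this
    have hdd : d * d ≤ 0 := by
      have hconj := star_left_conjugate_le_conjugate hswap b
      calc d * d = star b * (b * star b) * b := by rw [hd]; noncomm_ring
        _ ≤ star b * (‖y‖ ^ 2 • (inner A x x : A)) * b := hconj
        _ = ‖y‖ ^ 2 • c := by rw [hc, mul_smul_comm, smul_mul_assoc]
        _ = 0 := by rw [hcz, smul_zero]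
    have hdd0 : d * d = 0 := le_antisymm hdd (by simpa [hd] using star_mul_self_nonneg d)
    have hdz : d = 0 := by
      have hsd : IsSelfAdjoint d := by simp [hd]
      have hn : ‖d‖ ^ 2 = 0 := by
        rw [pow_two, ← CStarRing.norm_star_mul_self, hsd.star_eq, hdd0, norm_zero]
      exact norm_eq_zero.mp (pow_eq_zero_iff two_ne_zero |>.mp hn)
    have hn : ‖b‖ ^ 2 = 0 := by
      rw [pow_two, ← CStarRing.norm_star_mul_self, ← hd, hdz, norm_zero]
    exact norm_eq_zero.mp (pow_eq_zero_iff two_ne_zero |>.mp hn)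
end

section
/- Let A be a unital C*-algebra whose set of characters is total, X a right A-module which is a normed space, and E, F: X × X → A multi-A-linear functions with E bounded and strong (E(w,w) invertible for some w). If E(x,y) = 0 implies F(x,y) = 0 for all x, y ∈ X, then there exists c ∈ A such that F(x,y) = cE(x,y) for all x, y ∈ X; consequently F is bounded. -/
open scoped RightActions

/-- If the characters of a unital C*-algebra `A` are total, `E, F : X² → A` are
multi-`A`-linear, `E` is bounded and strong, and `E(x,y) = 0 ⟹ F(x,y) = 0`,
then `F = c·E` for some `c ∈ A`; consequently `F` is bounded. -/
theorem stmt_9 {A X : Type*} [CStarAlgebra A]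
    [NormedAddCommGroup X] [NormedSpace ℂ X] [Module Aᵐᵒᵖ X]
    (htot : ∀ a : A,
      (∀ φ : A →ₗ[ℂ] ℂ, (∀ x y : A, φ (x * y) = φ x * φ y) → φ a = 0) → a = 0)
    (E F : X → X → A)
    (hEadd₁ : ∀ x y z : X, E (x + y) z = E x z + E y z)
    (hEadd₂ : ∀ x y z : X, E x (y + z) = E x y + E x z)
    (hElin₁ : ∀ (α : ℂ) (a : A) (x y : X),
      E (α • (x <• a)) y = (starRingEnd ℂ α) • (star a * E x y))
    (hElin₂ : ∀ (α : ℂ) (a : A) (x y : X),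
      E x (α • (y <• a)) = α • (E x y * a))
    (hFadd₁ : ∀ x y z : X, F (x + y) z = F x z + F y z)
    (hFadd₂ : ∀ x y z : X, F x (y + z) = F x y + F x z)
    (hFlin₁ : ∀ (α : ℂ) (a : A) (x y : X),
      F (α • (x <• a)) y = (starRingEnd ℂ α) • (star a * F x y))
    (hFlin₂ : ∀ (α : ℂ) (a : A) (x y : X),
      F x (α • (y <• a)) = α • (F x y * a))
    (M : ℝ) (hbd : ∀ x y : X, ‖E x y‖ ≤ M * ‖x‖ * ‖y‖)
    (w : X) (hw : IsUnit (E w w))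
    (hpres : ∀ x y : X, E x y = 0 → F x y = 0) :
    (∃ c : A, ∀ x y : X, F x y = c * E x y) ∧
      ∃ M' : ℝ, ∀ x y : X, ‖F x y‖ ≤ M' * ‖x‖ * ‖y‖ := by
  classical
  -- A is commutative since characters are total
  have hc : ∀ a b : A, a * b = b * a := by
    intro a b
    have h0 : a * b - b * a = 0 := by
      refine htot _ (fun φ hφ => ?_)
      rw [map_sub, hφ, hφ]; ring
    exact sub_eq_zero.mp h0
  letI : CommRing A := { (inferInstance : Ring A) with mul_comm := hc }
  -- module-multiplicativity lemmas
  have hEm₁ : ∀ (a : A) (x y : X), E (x <• a) y = star a * E x y := by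
    intro a x y; simpa using hElin₁ 1 a x y
  have hEm₂ : ∀ (a : A) (x y : X), E x (y <• a) = E x y * a := by
    intro a x y; simpa using hElin₂ 1 a x y
  have hFm₁ : ∀ (a : A) (x y : X), F (x <• a) y = star a * F x y := by
    intro a x y; simpa using hFlin₁ 1 a x y
  have hFm₂ : ∀ (a : A) (x y : X), F x (y <• a) = F x y * a := by
    intro a x y; simpa using hFlin₂ 1 a x y
  -- subtraction lemmas
  have hEsub₁ : ∀ x y z : X, E (x - y) z = E x z - E y z := by
    intro x y z
    have h := hEadd₁ (x - y) y z
    rw [sub_add_cancel] at h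
    exact eq_sub_of_add_eq h.symm
  have hEsub₂ : ∀ x y z : X, E x (y - z) = E x y - E x z := by
    intro x y z
    have h := hEadd₂ x (y - z) z
    rw [sub_add_cancel] at h
    exact eq_sub_of_add_eq h.symm
  have hFsub₁ : ∀ x y z : X, F (x - y) z = F x z - F y z := by
    intro x y z
    have h := hFadd₁ (x - y) y z
    rw [sub_add_cancel] at h
    exact eq_sub_of_add_eq h.symm
  have hFsub₂ : ∀ x y z : X, F x (y - z) = F x y - F x z := by
    intro x y z
    have h := hFadd₂ x (y - z) z
    rw [sub_add_cancel] at h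
    exact eq_sub_of_add_eq h.symm
  -- key identity in the second slot
  have key2 : ∀ u y v : X, F u y * E u v = F u v * E u y := by
    intro u y v
    have hEt : E u (y <• (E u v) - v <• (E u y)) = 0 := by
      rw [hEsub₂, hEm₂, hEm₂]; ring
    have hFt := hpres _ _ hEt
    rw [hFsub₂, hFm₂, hFm₂, sub_eq_zero] at hFt
    exact hFt
  -- key identity in the first slot
  have key1 : ∀ x u : X, E u w * F x w = E x w * F u w := by
    intro x u
    have hEs : E (x <• star (E u w) - u <• star (E x w)) w = 0 := by
      rw [hEsub₁, hEm₁, hEm₁, star_star, star_star]; ring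
    have hFs := hpres _ _ hEs
    rw [hFsub₁, hFm₁, hFm₁, star_star, star_star, sub_eq_zero] at hFs
    exact hFs
  set c : A := F w w * ↑hw.unit⁻¹ with hcdef
  have hinv : (↑hw.unit⁻¹ : A) * E w w = 1 := hw.val_inv_mul
  -- F(w, y) = c * E(w, y)
  have hFw₂ : ∀ y : X, F w y = c * E w y := by
    intro y
    refine hw.mul_left_cancel ?_
    rw [hcdef]
    linear_combination key2 w y w - (F w w * E w y) * hinv
  -- F(x, w) = c * E(x, w)
  have hFw₁ : ∀ x : X, F x w = c * E x w := by
    intro x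
    refine hw.mul_left_cancel ?_
    rw [hcdef]
    linear_combination key1 x w - (F w w * E x w) * hinv
  have hmain : ∀ x y : X, F x y = c * E x y := by
    intro x y
    refine hw.mul_left_cancel ?_
    have k3 := key2 (x + w) y w
    rw [hFadd₁ x w y, hEadd₁ x w w, hFadd₁ x w w, hEadd₁ x w y, hFw₂ y,
      hFw₁ x, hFw₁ w] at k3
    have k4 := key2 x y w
    rw [hFw₁ x] at k4
    linear_combination k3 - k4
  refine ⟨⟨c, hmain⟩, ‖c‖ * M, fun x y => ?_⟩
  calc ‖F x y‖ = ‖c * E x y‖ := by rw [hmain]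
    _ ≤ ‖c‖ * ‖E x y‖ := norm_mul_le _ _
    _ ≤ ‖c‖ * (M * ‖x‖ * ‖y‖) :=
        mul_le_mul_of_nonneg_left (hbd x y) (norm_nonneg c)
    _ = ‖c‖ * M * ‖x‖ * ‖y‖ := by ring
end

section
/- Under the hypotheses of the multi-A-linear preservation theorem (A unital with total character set, E, F: Xⁿ → A multi-A-linear, E bounded and strong, and E(x₁,…,xₙ)=0 ⟹ F(x₁,…,xₙ)=0), the following are equivalent: (i) there exists z ∈ X with both E(z,…,z) and F(z,…,z) invertible in A; (ii) for all z₁,…,zₙ ∈ X, if E(z₁,…,zₙ) is invertible then F(z₁,…,zₙ) is invertible. -/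
open scoped RightActions

/-- `G : Xⁿ → A` is multi-`A`-linear: additive in each coordinate, conjugate-`A`-linear in
the odd-numbered coordinates (index `i` with `i` even, i.e. coordinate `j = i + 1` odd) and
`A`-linear in the even-numbered ones. -/
def IsMultiALinear {A X : Type*} [CStarAlgebra A]
    [AddCommGroup X] [Module ℂ X] [Module Aᵐᵒᵖ X] {n : ℕ}
    (G : (Fin n → X) → A) : Prop :=
  (∀ (x : Fin n → X) (i : Fin n) (u v : X),
      G (Function.update x i (u + v))
        = G (Function.update x i u) + G (Function.update x i v)) ∧
  (∀ (x : Fin n → X) (i : Fin n) (α : ℂ) (a : A) (u : X), i.val % 2 = 0 →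
      G (Function.update x i (α • (u <• a)))
        = (starRingEnd ℂ α) • (star a * G (Function.update x i u))) ∧
  (∀ (x : Fin n → X) (i : Fin n) (α : ℂ) (a : A) (u : X), i.val % 2 = 1 →
      G (Function.update x i (α • (u <• a)))
        = α • (G (Function.update x i u) * a))

section Aux

variable {A X : Type*} [CStarAlgebra A]
    [NormedAddCommGroup X] [NormedSpace ℂ X] [Module Aᵐᵒᵖ X] {n : ℕ}

private lemma ml_smul_real {G : (Fin n → X) → A} (hG : IsMultiALinear G)
    (x : Fin n → X) (i : Fin n) (t : ℝ) (u : X) :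
    G (Function.update x i ((t : ℂ) • u)) = (t : ℂ) • G (Function.update x i u) := by
  rcases Nat.mod_two_eq_zero_or_one i.val with h | h
  · have := hG.2.1 x i (t : ℂ) 1 u h
    simpa [Complex.conj_ofReal] using this
  · have := hG.2.2 x i (t : ℂ) 1 u h
    simpa using this

private lemma ml_smulA_even {G : (Fin n → X) → A} (hG : IsMultiALinear G)
    (x : Fin n → X) (i : Fin n) (hi : i.val % 2 = 0) (a : A) (u : X) :
    G (Function.update x i (u <• a)) = star a * G (Function.update x i u) := by
  have := hG.2.1 x i 1 a u hi
  simpa using this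

private lemma ml_smulA_odd {G : (Fin n → X) → A} (hG : IsMultiALinear G)
    (x : Fin n → X) (i : Fin n) (hi : i.val % 2 = 1) (a : A) (u : X) :
    G (Function.update x i (u <• a)) = G (Function.update x i u) * a := by
  have := hG.2.2 x i 1 a u hi
  simpa using this

private lemma ml_expand {G : (Fin n → X) → A} (hG : IsMultiALinear G) (u v : Fin n → X) :
    ∃ a : ℕ → A, a 0 = G u ∧
      ∀ t : ℝ, G (fun i => u i + (t : ℂ) • v i)
        = ∑ j ∈ Finset.range (n + 1), (t : ℂ) ^ j • a j := by
  suffices H : ∀ k : ℕ, k ≤ n → ∀ u : Fin n → X, ∃ a : ℕ → A, a 0 = G u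
      ∧ (∀ j, k < j → a j = 0)
      ∧ ∀ t : ℝ, G (fun i => if i.val < k then u i + (t : ℂ) • v i else u i)
        = ∑ j ∈ Finset.range (k + 1), (t : ℂ) ^ j • a j by
    obtain ⟨a, h0, _, hsum⟩ := H n le_rfl u
    refine ⟨a, h0, fun t => ?_⟩
    have := hsum t
    simpa [Fin.is_lt] using this
  intro k
  induction k with
  | zero =>
    intro _ u
    refine ⟨fun j => if j = 0 then G u else 0, by simp, by intro j hj; simp [hj.ne'], ?_⟩
    intro t
    simp
  | succ k IH =>
    intro hk u
    have hkn : k < n := hk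
    set K : Fin n := ⟨k, hkn⟩ with hK
    obtain ⟨a, ha0, haz, hA⟩ := IH (le_of_lt hkn) u
    obtain ⟨b, hb0, hbz, hB⟩ := IH (le_of_lt hkn) (Function.update u K (v K))
    refine ⟨fun j => a j + (if j = 0 then 0 else b (j - 1)), by simp [ha0], ?_, ?_⟩
    · intro j hj
      have h1 : a j = 0 := haz j (by omega)
      have h2 : b (j - 1) = 0 := hbz (j - 1) (by omega)
      have h3 : j ≠ 0 := by omega
      simp [h1, h2, h3]
    · intro t
      have hfun1 : (fun i : Fin n => if i.val < k + 1 then u i + (t : ℂ) • v i else u i)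
          = Function.update (fun i : Fin n => if i.val < k then u i + (t : ℂ) • v i else u i) K
              (u K + (t : ℂ) • v K) := by
        funext i
        rcases eq_or_ne i K with rfl | hne
        · simp [hK]
        · have : i.val ≠ k := fun h => hne (Fin.ext h)
          rw [Function.update_of_ne hne]
          by_cases h' : i.val < k
          · simp [h', Nat.lt_succ_of_lt h']
          · have h'' : ¬ i.val < k + 1 := by omega
            simp [h', h'']
      have hXk : (fun i : Fin n => if i.val < k then u i + (t : ℂ) • v i else u i) K = u K := by
        simp [hK]
      have hfun2 : Function.update
            (fun i : Fin n => if i.val < k then u i + (t : ℂ) • v i else u i) K (v K)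
          = (fun i : Fin n => if i.val < k then (Function.update u K (v K)) i + (t : ℂ) • v i
              else (Function.update u K (v K)) i) := by
        funext i
        rcases eq_or_ne i K with rfl | hne
        · simp [hK]
        · have : i.val ≠ k := fun h => hne (Fin.ext h)
          rw [Function.update_of_ne hne, Function.update_of_ne hne]
      rw [hfun1]
      have step1 : G (Function.update
              (fun i : Fin n => if i.val < k then u i + (t : ℂ) • v i else u i) K
              (u K + (t : ℂ) • v K))
          = G (fun i : Fin n => if i.val < k then u i + (t : ℂ) • v i else u i)
            + (t : ℂ) • G (fun i : Fin n =>
                if i.val < k then (Function.update u K (v K)) i + (t : ℂ) • v i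
                else (Function.update u K (v K)) i) := by
        rw [hG.1, ml_smul_real hG, hfun2]
        congr 2
        conv_lhs => rw [← hXk]
        rw [Function.update_eq_self]
      rw [step1, hA t, hB t]
      rw [Finset.smul_sum]
      have hshift : ∑ j ∈ Finset.range (k + 1 + 1),
              (t : ℂ) ^ j • (fun j => a j + (if j = 0 then 0 else b (j - 1))) j
          = (∑ j ∈ Finset.range (k + 1 + 1), (t : ℂ) ^ j • a j)
            + ∑ j ∈ Finset.range (k + 1 + 1),
                (t : ℂ) ^ j • (if j = 0 then (0 : A) else b (j - 1)) := by
        rw [← Finset.sum_add_distrib]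
        congr 1; funext j; rw [smul_add]
      rw [hshift]
      congr 1
      · conv_rhs => rw [Finset.sum_range_succ]
        rw [haz (k + 1) (Nat.lt_succ_self k), smul_zero, add_zero]
      · conv_rhs => rw [Finset.sum_range_succ']
        simp [pow_succ', mul_smul]

/-- The kill trick: if `E (update z i w)` is a unit `u`, then
`F z = E z * u⁻¹ * F (update z i w)`. -/
private lemma ml_kill {E F : (Fin n → X) → A}
    (hE : IsMultiALinear E) (hF : IsMultiALinear F)
    (hpres : ∀ x : Fin n → X, E x = 0 → F x = 0)
    (hcomm : ∀ a b : A, a * b = b * a)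
    (w : X) (z : Fin n → X) (i : Fin n) (u : Aˣ)
    (hu : (u : A) = E (Function.update z i w)) :
    F z = E z * ↑u⁻¹ * F (Function.update z i w) := by
  rcases Nat.mod_two_eq_zero_or_one i.val with hi | hi
  · set a : A := star (-(E z) * ↑u⁻¹) with ha
    have hstar : star a = -(E z) * ↑u⁻¹ := by rw [ha, star_star]
    have hEz' : E (Function.update z i (z i + (w <• a))) = 0 := by
      rw [hE.1, Function.update_eq_self, ml_smulA_even hE _ _ hi, hstar, ← hu,
        mul_assoc, neg_mul, Units.inv_mul, mul_one, add_neg_cancel]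
    have hFz' := hpres _ hEz'
    rw [hF.1, Function.update_eq_self, ml_smulA_even hF _ _ hi, hstar] at hFz'
    have := eq_neg_of_add_eq_zero_left hFz'
    rw [this, neg_mul, neg_mul, neg_neg]
  · set a : A := -(↑u⁻¹ * E z) with ha
    have hEz' : E (Function.update z i (z i + (w <• a))) = 0 := by
      rw [hE.1, Function.update_eq_self, ml_smulA_odd hE _ _ hi, ha, ← hu,
        mul_neg, ← mul_assoc, Units.mul_inv, one_mul, add_neg_cancel]
    have hFz' := hpres _ hEz'
    rw [hF.1, Function.update_eq_self, ml_smulA_odd hF _ _ hi, ha] at hFz'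
    have h2 := eq_neg_of_add_eq_zero_left hFz'
    rw [mul_neg, neg_neg] at h2
    rw [h2]
    rw [hcomm (F (Function.update z i w)) (↑u⁻¹ * E z), hcomm (↑u⁻¹ : A) (E z)]

end Aux

/-- If the characters of `A` are total, `E, F : Xⁿ → A` (`n ≥ 2`) are multi-`A`-linear,
`E` is bounded and strong, and `E(x₁,…,xₙ)=0 ⟹ F(x₁,…,xₙ)=0`, then `F = c·E`. -/
theorem stmt_11 {A X : Type*} [CStarAlgebra A]
    [NormedAddCommGroup X] [NormedSpace ℂ X] [Module Aᵐᵒᵖ X]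
    (htot : ∀ a : A,
      (∀ φ : A →ₗ[ℂ] ℂ, (∀ x y : A, φ (x * y) = φ x * φ y) → φ a = 0) → a = 0)
    {n : ℕ} (hn : 2 ≤ n) (E F : (Fin n → X) → A)
    (hE : IsMultiALinear E) (hF : IsMultiALinear F)
    (M : ℝ) (hbd : ∀ x : Fin n → X, ‖E x‖ ≤ M * ∏ i, ‖x i‖)
    (w : X) (hw : IsUnit (E fun _ => w))
    (hpres : ∀ x : Fin n → X, E x = 0 → F x = 0) :
    (∃ z : X, IsUnit (E fun _ => z) ∧ IsUnit (F fun _ => z)) ↔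
      (∀ x : Fin n → X, IsUnit (E x) → IsUnit (F x)) := by
  classical
  -- commutativity of A
  have hcomm : ∀ a b : A, a * b = b * a := by
    intro a b
    have h := htot (a * b - b * a) (fun φ hφ => by
      rw [map_sub, hφ, hφ, mul_comm (φ a) (φ b), sub_self])
    exact sub_eq_zero.mp h
  set p : Fin n → X := fun _ => w with hp
  set c : A := F p * ↑hw.unit⁻¹ with hc
  -- the main claim: F = c • E
  have main : ∀ k : ℕ, ∀ x : Fin n → X, (∀ i : Fin n, k ≤ i.val → x i = w) → F x = c * E x := by
    intro k
    induction k with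
    | zero =>
      intro x hx
      have hxp : x = p := funext fun i => hx i (Nat.zero_le _)
      subst hxp
      rw [hc, mul_assoc, hw.val_inv_mul, mul_one]
    | succ k IH =>
      intro x hx
      by_cases hkn : n ≤ k
      · exact IH x fun i hi => absurd hi (by have := i.isLt; omega)
      push_neg at hkn
      rcases subsingleton_or_nontrivial A with hs | hnt
      · exact Subsingleton.elim _ _
      set K : Fin n := ⟨k, hkn⟩ with hK
      set y : Fin n → X := Function.update x K w with hy
      obtain ⟨ey, hey0, hEy⟩ := ml_expand hE p (fun i => y i - w)
      obtain ⟨ex, -, hEx⟩ := ml_expand hE p (fun i => x i - w)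
      obtain ⟨fx, -, hFx⟩ := ml_expand hF p (fun i => x i - w)
      set r : ℝ := ‖((hw.unit⁻¹ : Aˣ) : A)‖ with hrdef
      have hr : 0 < r := Units.norm_pos hw.unit⁻¹
      set C : ℝ := ∑ j ∈ Finset.range n, ‖ey (j + 1)‖ with hCdef
      have hC : 0 ≤ C := Finset.sum_nonneg fun _ _ => norm_nonneg _
      set δ : ℝ := min 1 (r⁻¹ / (C + 1)) with hδdef
      have hδ : 0 < δ := lt_min one_pos (div_pos (inv_pos.mpr hr) (by linarith))
      have hδ1 : δ ≤ 1 := min_le_left _ _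
      -- the deformed tuples
      have hyt_eq : ∀ t : ℝ, (fun i => p i + (t : ℂ) • (y i - w))
          = Function.update (fun i => p i + (t : ℂ) • (x i - w)) K w := by
        intro t
        funext i
        rcases eq_or_ne i K with rfl | hne
        · simp [hy, hp]
        · rw [Function.update_of_ne hne, hy, Function.update_of_ne hne]
      have hyw : ∀ t : ℝ, ∀ i : Fin n, k ≤ i.val → (p i + (t : ℂ) • (y i - w)) = w := by
        intro t i hi
        rcases eq_or_ne i K with rfl | hne
        · simp [hy, hp]
        · have hik : k + 1 ≤ i.val := by
            rcases Nat.lt_or_ge k i.val with h | h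
            · omega
            · exact absurd (Fin.ext (le_antisymm h hi) : i = K) hne
          have : x i = w := hx i hik
          rw [hy, Function.update_of_ne hne, this]
          simp [hp]
      -- the key identity for small positive t
      have key : ∀ t : ℝ, 0 < t → t < δ →
          F (fun i => p i + (t : ℂ) • (x i - w)) = c * E (fun i => p i + (t : ℂ) • (x i - w)) := by
        intro t ht htδ
        have hbound : ‖E (fun i => p i + (t : ℂ) • (y i - w)) - E p‖ ≤ t * C := by
          rw [hEy t]
          have hsplit : ∑ j ∈ Finset.range (n + 1), (t : ℂ) ^ j • ey j
              = (∑ j ∈ Finset.range n, (t : ℂ) ^ (j + 1) • ey (j + 1)) + E p := by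
            rw [Finset.sum_range_succ']
            simp [hey0]
          rw [hsplit, add_sub_cancel_right]
          calc ‖∑ j ∈ Finset.range n, (t : ℂ) ^ (j + 1) • ey (j + 1)‖
              ≤ ∑ j ∈ Finset.range n, ‖(t : ℂ) ^ (j + 1) • ey (j + 1)‖ :=
                norm_sum_le _ _
            _ ≤ ∑ j ∈ Finset.range n, t * ‖ey (j + 1)‖ := by
                apply Finset.sum_le_sum
                intro j _
                rw [norm_smul, norm_pow, Complex.norm_real, Real.norm_eq_abs, abs_of_pos ht]
                have : t ^ (j + 1) ≤ t ^ 1 :=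
                  pow_le_pow_of_le_one ht.le (le_trans htδ.le hδ1) (by omega)
                rw [pow_one] at this
                exact mul_le_mul_of_nonneg_right this (norm_nonneg _)
            _ = t * C := by rw [← Finset.mul_sum]
        have hlt : ‖E (fun i => p i + (t : ℂ) • (y i - w)) - ↑hw.unit‖ < r⁻¹ := by
          rw [hw.unit_spec]
          have h2 : t < r⁻¹ / (C + 1) := lt_of_lt_of_le htδ (min_le_right _ _)
          have h3 : t * (C + 1) < r⁻¹ := (lt_div_iff₀ (by linarith)).mp h2
          calc ‖E (fun i => p i + (t : ℂ) • (y i - w)) - E p‖ ≤ t * C := hbound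
            _ < r⁻¹ := by nlinarith
        have hu : IsUnit (E (fun i => p i + (t : ℂ) • (y i - w))) :=
          (Units.ofNearby hw.unit _ hlt).isUnit
        have hukill := ml_kill hE hF hpres hcomm w
          (fun i => p i + (t : ℂ) • (x i - w)) K hu.unit
          (by rw [hu.unit_spec, hyt_eq t])
        rw [← hyt_eq t] at hukill
        have hyval : F (fun i => p i + (t : ℂ) • (y i - w))
            = c * E (fun i => p i + (t : ℂ) • (y i - w)) :=
          IH _ (hyw t)
        have hspec : (↑hu.unit : A) = E (fun i => p i + (t : ℂ) • (y i - w)) := hu.unit_spec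
        rw [hukill, hyval]
        calc E (fun i => p i + (t : ℂ) • (x i - w)) * ↑hu.unit⁻¹
              * (c * E (fun i => p i + (t : ℂ) • (y i - w)))
            = E (fun i => p i + (t : ℂ) • (x i - w))
              * (↑hu.unit⁻¹ * (E (fun i => p i + (t : ℂ) • (y i - w)) * c)) := by
              rw [hcomm c (E (fun i => p i + (t : ℂ) • (y i - w))), mul_assoc]
          _ = E (fun i => p i + (t : ℂ) • (x i - w)) * c := by
              rw [← mul_assoc (↑hu.unit⁻¹ : A), hu.val_inv_mul, one_mul]
          _ = c * E (fun i => p i + (t : ℂ) • (x i - w)) := hcomm _ _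
      -- polynomial bookkeeping
      set b : ℕ → A := fun j => fx j - c * ex j with hb
      have hcombine : ∀ t : ℝ,
          F (fun i => p i + (t : ℂ) • (x i - w)) - c * E (fun i => p i + (t : ℂ) • (x i - w))
            = ∑ j ∈ Finset.range (n + 1), (t : ℂ) ^ j • b j := by
        intro t
        rw [hFx t, hEx t, Finset.mul_sum, ← Finset.sum_sub_distrib]
        apply Finset.sum_congr rfl
        intro j _
        rw [hb, smul_sub, mul_smul_comm]
      have hpoly : ∀ t : ℝ, 0 < t → t < δ →
          ∑ j ∈ Finset.range (n + 1), (t : ℂ) ^ j • b j = 0 := by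
        intro t ht htδ
        rw [← hcombine t, key t ht htδ, sub_self]
      have hx1 : (fun i => p i + ((1 : ℝ) : ℂ) • (x i - w)) = x := by
        funext i
        simp [hp]
      have hsub : F x - c * E x = ∑ j ∈ Finset.range (n + 1), ((1 : ℝ) : ℂ) ^ j • b j := by
        rw [← hx1, hcombine 1]
      rw [← sub_eq_zero]
      apply htot
      intro φ hφ
      set P : Polynomial ℂ :=
        ∑ j ∈ Finset.range (n + 1), Polynomial.C (φ (b j)) * Polynomial.X ^ j with hP
      have hPe : ∀ s : ℂ, P.eval s = ∑ j ∈ Finset.range (n + 1), φ (b j) * s ^ j := by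
        intro s
        rw [hP, Polynomial.eval_finset_sum]
        simp
      have hφsum : ∀ t : ℝ, φ (∑ j ∈ Finset.range (n + 1), (t : ℂ) ^ j • b j)
          = P.eval ((t : ℝ) : ℂ) := by
        intro t
        rw [map_sum, hPe]
        apply Finset.sum_congr rfl
        intro j _
        rw [map_smul, smul_eq_mul, mul_comm]
      have hanti : StrictAnti (fun m : ℕ => δ / 2 / (m + 1)) := by
        intro m m' hmm
        apply div_lt_div_of_pos_left (by positivity) (by positivity)
        exact_mod_cast by exact_mod_cast Nat.add_lt_add_right hmm 1
      have hroot : ∀ m : ℕ, P.IsRoot ((δ / 2 / (m + 1) : ℝ) : ℂ) := by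
        intro m
        have h1 : 0 < δ / 2 / (m + 1) := by positivity
        have h2 : δ / 2 / (m + 1) < δ := by
          calc δ / 2 / (m + 1) ≤ δ / 2 := by
                apply div_le_self (by positivity)
                have : (0 : ℝ) ≤ m := Nat.cast_nonneg m
                linarith
            _ < δ := half_lt_self hδ
        show P.eval _ = 0
        rw [← hφsum, hpoly _ h1 h2, map_zero]
      have hP0 : P = 0 := by
        apply Polynomial.eq_zero_of_infinite_isRoot
        refine Set.infinite_of_injective_forall_mem
          (f := fun m : ℕ => ((δ / 2 / (m + 1) : ℝ) : ℂ)) ?_ fun m => hroot m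
        intro m m' h
        exact hanti.injective (Complex.ofReal_inj.mp h)
      rw [hsub, hφsum 1, hP0, Polynomial.eval_zero]
  have hall : ∀ x : Fin n → X, F x = c * E x := by
    intro x
    exact main n x fun i hi => absurd hi (by have := i.isLt; omega)
  constructor
  · rintro ⟨z, hEz, hFz⟩ x hEx
    have h1 : IsUnit (c * E fun _ => z) := by rw [← hall]; exact hFz
    have hcu : IsUnit c := by
      have h2 : IsUnit ((c * E fun _ => z) * ↑hEz.unit⁻¹) :=
        h1.mul (hEz.unit⁻¹).isUnit
      rwa [mul_assoc, hEz.mul_val_inv, mul_one] at h2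
    rw [hall x]
    exact hcu.mul hEx
  · intro h
    exact ⟨w, hw, h _ hw⟩
end

section
/- Let X be a full Hilbert C*-module over a C*-algebra A. If for all x, y ∈ X, x ⊥_B y implies ‖x + y‖ ≥ ‖y‖, then the strong Birkhoff–James orthogonality relation on X coincides with inner-product orthogonality: for all z, w ∈ X, (∀a ∈ A, ‖z + wa‖ ≥ ‖z‖) implies ⟨z, w⟩ = 0. -/
open scoped RightActions

lemma aux_norm_le_max {A : Type*} [CStarAlgebra A] [PartialOrder A] [StarOrderedRing A]
    [Nontrivial A] {X : A} {α β : ℝ} (hX : IsSelfAdjoint X)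
    (h1 : X ≤ algebraMap ℝ A α) (h2 : -(algebraMap ℝ A β) ≤ X) : ‖X‖ ≤ max α β := by
  rcases CStarAlgebra.norm_or_neg_norm_mem_spectrum hX with hmem | hmem
  · exact le_max_of_le_left <| (le_algebraMap_iff_spectrum_le (a := X)).mp h1 _ hmem
  · have h2' : algebraMap ℝ A (-β) ≤ X := by rwa [map_neg]
    have := (algebraMap_le_iff_le_spectrum (a := X)).mp h2' _ hmem
    exact le_max_of_le_right (by linarith)

/-- The Hilbert C⋆-module class as it stood in Mathlib of December 2024: a *right* `A`-module
(`SMul Aᵐᵒᵖ E`) with `inner x (y <• a) = inner x y * a`. -/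
class CStarModuleRightOld (A E : Type*) [NonUnitalSemiring A] [StarRing A]
    [Module ℂ A] [AddCommGroup E] [Module ℂ E] [PartialOrder A] [SMul Aᵐᵒᵖ E] [Norm A] [Norm E]
    extends Inner A E where
  inner_add_right {x} {y} {z} : inner x (y + z) = inner x y + inner x z
  inner_self_nonneg {x} : 0 ≤ inner x x
  inner_self {x} : inner x x = 0 ↔ x = 0
  inner_op_smul_right {a : A} {x y : E} : inner x (y <• a) = inner x y * a
  inner_smul_right_complex {z : ℂ} {x} {y} : inner x (z • y) = z • inner x y
  star_inner x y : star (inner x y) = inner y x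
  norm_eq_sqrt_norm_inner_self x : ‖x‖ = √‖inner x x‖

namespace CStarModuleRightOld

variable {A E : Type*} [CStarAlgebra A] [PartialOrder A]
    [NormedAddCommGroup E] [NormedSpace ℂ E] [Module Aᵐᵒᵖ E] [CStarModuleRightOld A E]

lemma inner_zero_right' {x : E} : inner A x (0 : E) = 0 := by
  have h : inner A x (0 : E) = inner A x 0 + inner A x 0 := by
    rw [← CStarModuleRightOld.inner_add_right, add_zero]
  simpa using h

lemma inner_neg_right' {x y : E} : inner A x (-y) = -inner A x y := by
  apply eq_neg_of_add_eq_zero_left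
  rw [← CStarModuleRightOld.inner_add_right, neg_add_cancel, inner_zero_right']

lemma inner_sub_right' {x y z : E} : inner A x (y - z) = inner A x y - inner A x z := by
  rw [sub_eq_add_neg, CStarModuleRightOld.inner_add_right, inner_neg_right', ← sub_eq_add_neg]

lemma inner_sub_left' {x y z : E} : inner A (x - y) z = inner A x z - inner A y z := by
  rw [← CStarModuleRightOld.star_inner z (x - y), inner_sub_right', star_sub,
    CStarModuleRightOld.star_inner, CStarModuleRightOld.star_inner]

lemma inner_op_smul_left' {a : A} {x y : E} : inner A (x <• a) y = star a * inner A x y := by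
  rw [← CStarModuleRightOld.star_inner y, CStarModuleRightOld.inner_op_smul_right, star_mul,
    CStarModuleRightOld.star_inner]

lemma inner_smul_right_real' {r : ℝ} {x y : E} : inner A x (r • y) = r • inner A x y := by
  rw [RCLike.real_smul_eq_coe_smul (K := ℂ) r y, CStarModuleRightOld.inner_smul_right_complex,
    ← RCLike.real_smul_eq_coe_smul]

lemma inner_smul_left_real' {r : ℝ} {x y : E} : inner A (r • x) y = r • inner A x y := by
  rw [← CStarModuleRightOld.star_inner y, inner_smul_right_real', star_smul, star_trivial,
    CStarModuleRightOld.star_inner]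

lemma norm_sq_eq' {x : E} : ‖x‖ ^ 2 = ‖inner A x x‖ := by
  rw [CStarModuleRightOld.norm_eq_sqrt_norm_inner_self (A := A) x, Real.sq_sqrt (norm_nonneg _)]

end CStarModuleRightOld

/-- For a full Hilbert `A`-module, if Birkhoff–James orthogonality `x ⊥_B y` always implies
`‖x + y‖ ≥ ‖y‖`, then strong Birkhoff–James orthogonality implies inner-product
orthogonality. -/
theorem stmt_13 {A E : Type*} [CStarAlgebra A] [PartialOrder A] [StarOrderedRing A]
    [NormedAddCommGroup E] [NormedSpace ℂ E] [CompleteSpace E]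
    [Module Aᵐᵒᵖ E] [CStarModuleRightOld A E]
    (hfull : Dense
      ((TwoSidedIdeal.span {a : A | ∃ x y : E, a = inner A x y} : TwoSidedIdeal A) : Set A))
    (h : ∀ x y : E, (∀ lam : ℂ, ‖x + lam • y‖ ≥ ‖x‖) → ‖x + y‖ ≥ ‖y‖) :
    ∀ z w : E, (∀ a : A, ‖z + w <• a‖ ≥ ‖z‖) → (inner A z w : A) = 0 := by
  intro z w hzw
  rcases subsingleton_or_nontrivial A with hA | hA
  · exact Subsingleton.elim _ 0
  set b : A := inner A z w with hb_def
  set c : A := inner A w z with hc_def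
  set T : A := inner A w w with hT_def
  set S : A := inner A z z with hS_def
  have hbc : star b = c := CStarModuleRightOld.star_inner z w
  have hT : (0 : A) ≤ T := CStarModuleRightOld.inner_self_nonneg
  have hS : (0 : A) ≤ S := CStarModuleRightOld.inner_self_nonneg
  have hTsa : IsSelfAdjoint T := .of_nonneg hT
  have hone : (0 : A) ≤ 1 := by simpa using star_mul_self_nonneg (1 : A)
  -- the two scalar actions are compatible
  have smul_op : ∀ (lam : ℂ) (a : A), lam • (w <• a) = w <• (lam • a) := by
    intro lam a
    have key : ∀ u : E, (inner A u (lam • (w <• a) - w <• (lam • a)) : A) = 0 := by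
      intro u
      rw [CStarModuleRightOld.inner_sub_right', CStarModuleRightOld.inner_smul_right_complex,
        CStarModuleRightOld.inner_op_smul_right, CStarModuleRightOld.inner_op_smul_right, mul_smul_comm, sub_self]
    exact sub_eq_zero.mp (CStarModuleRightOld.inner_self.mp (key _))
  -- symmetry consequence of `h`
  have hsym : ∀ a : A, ‖w <• a‖ ≤ ‖z + w <• a‖ := by
    intro a
    refine h z (w <• a) fun lam => ?_
    rw [smul_op]
    exact hzw (lam • a)
  -- key inequality
  have KI : ∀ (a : A) (s : ℝ), 0 < s → ‖w <• a‖ ≤ ‖w <• a - s • z‖ := by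
    intro a s hs
    have hs' : (s : ℂ) ≠ 0 := by exact_mod_cast hs.ne'
    have h1 := hsym ((-(s : ℂ)⁻¹) • a)
    have e1 : w <• a - s • z = (-(s : ℂ)) • (z + w <• ((-(s : ℂ)⁻¹) • a)) := by
      rw [smul_add, smul_op, smul_smul]
      have e2 : (-(s : ℂ)) * (-(s : ℂ)⁻¹) = 1 := by field_simp
      rw [e2, one_smul]
      have e3 : (-(s : ℂ)) • z = -(s • z) := by
        rw [neg_smul, Complex.coe_smul]
      rw [e3]
      abel
    have e2 : ‖w <• ((-(s : ℂ)⁻¹) • a)‖ = s⁻¹ * ‖w <• a‖ := by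
      rw [← smul_op, norm_smul]
      simp [abs_of_pos hs]
    calc ‖w <• a‖ = s * (s⁻¹ * ‖w <• a‖) := by field_simp
      _ ≤ s * ‖z + w <• ((-(s : ℂ)⁻¹) • a)‖ := by
          rw [← e2]; exact mul_le_mul_of_nonneg_left h1 hs.le
      _ = ‖w <• a - s • z‖ := by
          rw [e1, norm_smul]
          simp [abs_of_pos hs]
  -- the inverse of 1 + T
  have hUnit : IsUnit (1 + T) := by
    have hm : (-1 : ℝ) ∉ spectrum ℝ T := fun hm => by
      have := spectrum_nonneg_of_nonneg hT hm; linarith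
    rw [spectrum.notMem_iff] at hm
    have e : algebraMap ℝ A (-1) - T = -(1 + T) := by
      rw [map_neg, map_one]; abel
    rw [e] at hm
    exact (IsUnit.neg_iff _).mp hm
  obtain ⟨Fu, hFu⟩ := hUnit
  set F : A := ↑Fu⁻¹ with hF_def
  have hF1 : F * (1 + T) = 1 := by rw [hF_def, ← hFu]; exact Fu.inv_mul
  have hF2 : (1 + T) * F = 1 := by rw [hF_def, ← hFu]; exact Fu.mul_inv
  have hFT : F * T = T * F := by
    have e1 : F + F * T = 1 := by rw [← hF1, mul_add, mul_one]
    have e2 : F + T * F = 1 := by rw [← hF2, add_mul, one_mul]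
    have e3 := e1.trans e2.symm
    have := add_left_cancel e3
    exact this
  have h1Tsa : star (1 + T) = 1 + T := by rw [star_add, star_one, hTsa.star_eq]
  have hFsa : IsSelfAdjoint F := by
    have hsa1 : star F * (1 + T) = 1 := by
      have := congrArg star hF2
      rwa [star_mul, h1Tsa, star_one] at this
    show star F = F
    calc star F = star F * ((1 + T) * F) := by rw [hF2, mul_one]
      _ = (star F * (1 + T)) * F := by rw [mul_assoc]
      _ = F := by rw [hsa1, one_mul]
  have hF0 : (0 : A) ≤ F := by
    have e : F = star F * (1 + T) * F := by
      rw [hFsa.star_eq, mul_assoc, hF2, mul_one]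
    rw [e]
    exact star_left_conjugate_nonneg (add_nonneg hone hT) F
  set a₀ : A := F * c with ha₀_def
  have hsta₀ : star a₀ = star c * F := by rw [ha₀_def, star_mul, hFsa.star_eq]
  set u : A := star c * F * c with hu_def
  have hu0 : (0 : A) ≤ u := star_left_conjugate_nonneg hF0 c
  have husa : IsSelfAdjoint u := .of_nonneg hu0
  set M : A := star a₀ * (T * a₀) with hM_def
  have hMeq : M = star c * (F * T * F) * c := by
    rw [hM_def, hsta₀, ha₀_def]; noncomm_ring
  have hFTF0 : (0 : A) ≤ F * T * F := by
    have := star_left_conjugate_nonneg hT F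
    rwa [hFsa.star_eq] at this
  have hM0 : (0 : A) ≤ M := by rw [hMeq]; exact star_left_conjugate_nonneg hFTF0 c
  have hMsa : IsSelfAdjoint M := .of_nonneg hM0
  have hFTF_le : F * T * F ≤ F := by
    have hTle : T ≤ 1 + T := le_add_of_nonneg_left hone
    calc F * T * F ≤ F * (1 + T) * F := hFsa.conjugate_le_conjugate hTle
      _ = F := by rw [mul_assoc, hF2, mul_one]
  have hMu : M ≤ u := by
    rw [hMeq, hu_def]
    exact star_left_conjugate_le_conjugate hFTF_le c
  have hcb : star c = b := by rw [← hbc, star_star]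
  have hMinner : (inner A (w <• a₀) (w <• a₀) : A) = M := by
    rw [CStarModuleRightOld.inner_op_smul_left', CStarModuleRightOld.inner_op_smul_right]
  set N : ℝ := ‖M‖ with hN_def
  have hMzero : M = 0 := by
    by_contra hMne
    have hN : 0 < N := norm_pos_iff.mpr hMne
    set s : ℝ := min (1/4) (N / (4*‖u‖ + 2*‖S‖ + 1)) with hs_def
    have hden : (0:ℝ) < 4*‖u‖ + 2*‖S‖ + 1 := by positivity
    have hs : 0 < s := lt_min (by norm_num) (div_pos hN hden)
    have hs4 : s ≤ 1/4 := min_le_left _ _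
    have hsN : s * (4*‖u‖ + 2*‖S‖ + 1) ≤ N := by
      rw [← le_div_iff₀ hden]; exact min_le_right _ _
    set v : E := w <• a₀ - s • z with hv_def
    set X : A := inner A v v with hX_def
    have c1 : (inner A (w <• a₀) z : A) = u := by
      rw [CStarModuleRightOld.inner_op_smul_left', hsta₀]
    have c2 : (inner A z (w <• a₀) : A) = u := by
      rw [CStarModuleRightOld.inner_op_smul_right]
      show b * a₀ = u
      rw [ha₀_def, hu_def, hcb, mul_assoc]
    have hXeq : X = M - (2*s) • u + (s^2) • S := by
      rw [hX_def, hv_def]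
      rw [CStarModuleRightOld.inner_sub_right', CStarModuleRightOld.inner_sub_left', CStarModuleRightOld.inner_sub_left']
      rw [CStarModuleRightOld.inner_smul_right_real', CStarModuleRightOld.inner_smul_left_real',
        CStarModuleRightOld.inner_smul_left_real', CStarModuleRightOld.inner_smul_right_real']
      rw [hMinner, c1, c2, ← hS_def]
      module
    have hXsa : IsSelfAdjoint X := CStarModuleRightOld.star_inner v v
    have hM_le : M ≤ algebraMap ℝ A N := hMsa.le_algebraMap_norm_self
    have hS_le : S ≤ algebraMap ℝ A ‖S‖ := (IsSelfAdjoint.of_nonneg hS).le_algebraMap_norm_self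
    have hu_le : u ≤ algebraMap ℝ A ‖u‖ := husa.le_algebraMap_norm_self
    have hupper : X ≤ algebraMap ℝ A ((1-2*s)*N + s^2*‖S‖) := by
      rw [hXeq]
      have t1 : M - (2*s) • u ≤ M - (2*s) • M :=
        sub_le_sub_left (smul_le_smul_of_nonneg_left hMu (by positivity)) M
      have e3 : M - (2*s) • M = (1-2*s) • M := by module
      have t2 : (1-2*s) • M ≤ (1-2*s) • (algebraMap ℝ A N) :=
        smul_le_smul_of_nonneg_left hM_le (by linarith)
      have t3 : (s^2) • S ≤ (s^2) • (algebraMap ℝ A ‖S‖) :=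
        smul_le_smul_of_nonneg_left hS_le (by positivity)
      calc M - (2*s) • u + (s^2) • S ≤ M - (2*s) • M + (s^2) • S := add_le_add_left t1 _
        _ = (1-2*s) • M + (s^2) • S := by rw [e3]
        _ ≤ (1-2*s) • (algebraMap ℝ A N) + (s^2) • (algebraMap ℝ A ‖S‖) := add_le_add t2 t3
        _ = algebraMap ℝ A ((1-2*s)*N + s^2*‖S‖) := by
            rw [map_add, Algebra.smul_def, Algebra.smul_def, ← map_mul, ← map_mul]
    have hlower : -(algebraMap ℝ A (2*s*‖u‖)) ≤ X := by
      rw [hXeq]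
      have t4 : -((2*s) • u) ≤ M - (2*s) • u + (s^2) • S := by
        rw [← sub_nonneg]
        have e4 : M - (2*s) • u + (s^2) • S - (-((2*s) • u)) = M + (s^2) • S := by abel
        rw [e4]
        exact add_nonneg hM0 (smul_nonneg (by positivity) hS)
      have t5 : -(algebraMap ℝ A (2*s*‖u‖)) ≤ -((2*s) • u) := by
        apply neg_le_neg
        calc (2*s) • u ≤ (2*s) • (algebraMap ℝ A ‖u‖) :=
              smul_le_smul_of_nonneg_left hu_le (by positivity)
          _ = algebraMap ℝ A (2*s*‖u‖) := by rw [Algebra.smul_def, ← map_mul]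
      exact t5.trans t4
    have hnorm_le : ‖X‖ ≤ max ((1-2*s)*N + s^2*‖S‖) (2*s*‖u‖) :=
      aux_norm_le_max hXsa hupper hlower
    have hKI := KI a₀ s hs
    have hsq : N ≤ ‖X‖ := by
      have h1 : ‖w <• a₀‖^2 ≤ ‖v‖^2 := by
        apply pow_le_pow_left₀ (norm_nonneg _) hKI
      rw [CStarModuleRightOld.norm_sq_eq' (A := A), CStarModuleRightOld.norm_sq_eq' (A := A)] at h1
      rwa [hMinner, ← hX_def] at h1
    have cu : 2*s*‖u‖ < N := by nlinarith [norm_nonneg u, norm_nonneg S]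
    have cS : (1-2*s)*N + s^2*‖S‖ < N := by nlinarith [norm_nonneg u, norm_nonneg S]
    have : ‖X‖ < N := lt_of_le_of_lt hnorm_le (max_lt cS cu)
    linarith
  -- conclude `⟪z, w⟫ = 0`
  set r : A := CFC.sqrt T with hr_def
  have hrr : r * r = T := CFC.sqrt_mul_sqrt_self T hT
  have hrsa : IsSelfAdjoint r := .of_nonneg (CFC.sqrt_nonneg T)
  have hra : star (r * a₀) * (r * a₀) = 0 := by
    have e : star (r * a₀) * (r * a₀) = star a₀ * (T * a₀) := by
      rw [star_mul, hrsa.star_eq, ← hrr]; noncomm_ring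
    rw [e, ← hM_def, hMzero]
  have hra0 : r * a₀ = 0 := (CStarRing.star_mul_self_eq_zero_iff _).mp hra
  have hTa₀ : T * a₀ = 0 := by rw [← hrr, mul_assoc, hra0, mul_zero]
  have hTc : T * c = 0 := by
    have h5 : F * (T * c) = 0 := by
      have e : T * a₀ = F * (T * c) := by rw [ha₀_def, ← mul_assoc, ← hFT, mul_assoc]
      rw [← e, hTa₀]
    calc T * c = ((1+T) * F) * (T * c) := by rw [hF2, one_mul]
      _ = (1+T) * (F * (T * c)) := by rw [mul_assoc]
      _ = 0 := by rw [h5, mul_zero]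
  have hwc : w <• c = 0 := by
    apply (CStarModuleRightOld.inner_self (A := A)).mp
    have e : (inner A (w <• c) (w <• c) : A) = star c * (T * c) := by
      rw [CStarModuleRightOld.inner_op_smul_left', CStarModuleRightOld.inner_op_smul_right]
    rw [e, hTc, mul_zero]
  have hbc0 : b * c = 0 := by
    have e : (inner A z (w <• c) : A) = b * c := CStarModuleRightOld.inner_op_smul_right
    rw [hwc, CStarModuleRightOld.inner_zero_right'] at e
    exact e.symm
  rw [← hbc] at hbc0
  exact (CStarRing.mul_star_self_eq_zero_iff b).mp hbc0
end

section
/- Let X be a Hilbert C*-module over a C*-algebra A and x, y ∈ X. If x⟨x,y⟩ is Birkhoff–James orthogonal to y (i.e., ‖x⟨x,y⟩ + λy‖ ≥ ‖x⟨x,y⟩‖ for all λ ∈ ℂ), then ⟨x, y⟩ = 0. -/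
open scoped RightActions

section RightCStarModuleLemmas
variable {A E : Type*} [CStarAlgebra A] [PartialOrder A]
    [NormedAddCommGroup E] [NormedSpace ℂ E] [Module Aᵐᵒᵖ E] [RightCStarModule A E]

@[simp] lemma RightCStarModule.inner_zero_right (x : E) : inner A x (0:E) = 0 := by
  have h := RightCStarModule.inner_add_right (A := A) (x := x) (y := (0:E)) (z := 0)
  simp only [add_zero] at h
  simpa using h

@[simp] lemma RightCStarModule.inner_zero_left_s19 (x : E) : inner A (0:E) x = 0 := by
  rw [← RightCStarModule.star_inner, RightCStarModule.inner_zero_right, star_zero]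

lemma RightCStarModule.inner_neg_right_s19 (x y : E) : inner A x (-y) = - inner A x y := by
  have := RightCStarModule.inner_smul_right_complex (A := A) (z := -1) (x := x) (y := y)
  simpa using this

lemma RightCStarModule.inner_sub_right_s19 (x y z : E) :
    inner A x (y - z) = inner A x y - inner A x z := by
  rw [sub_eq_add_neg, RightCStarModule.inner_add_right, RightCStarModule.inner_neg_right_s19,
    ← sub_eq_add_neg]

lemma RightCStarModule.inner_sub_left_s19 (x y z : E) :
    inner A (x - y) z = inner A x z - inner A y z := by
  rw [← RightCStarModule.star_inner z, RightCStarModule.inner_sub_right_s19, star_sub,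
    RightCStarModule.star_inner, RightCStarModule.star_inner]

lemma RightCStarModule.inner_op_smul_left_s19 (a : A) (x y : E) :
    inner A (x <• a) y = star a * inner A x y := by
  rw [← RightCStarModule.star_inner y, RightCStarModule.inner_op_smul_right, star_mul,
    RightCStarModule.star_inner]

lemma RightCStarModule.inner_smul_right_real_s19 (r : ℝ) (x y : E) :
    inner A x (r • y) = r • inner A x y := by
  rw [← Complex.coe_smul, RightCStarModule.inner_smul_right_complex, Complex.coe_smul]

lemma RightCStarModule.inner_smul_left_real_s19 (r : ℝ) (x y : E) :
    inner A (r • x) y = r • inner A x y := by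
  have hs : star (r : ℂ) = r := Complex.conj_ofReal r
  rw [← RightCStarModule.star_inner y, RightCStarModule.inner_smul_right_real_s19,
    ← Complex.coe_smul, star_smul, hs, Complex.coe_smul, RightCStarModule.star_inner]

lemma RightCStarModule.isSelfAdjoint_inner_self_s19 {x : E} : IsSelfAdjoint (inner A x x) :=
  RightCStarModule.star_inner x x

lemma RightCStarModule.norm_sq_eq_s19 {x : E} : ‖x‖ ^ 2 = ‖inner A x x‖ := by
  rw [RightCStarModule.norm_eq_sqrt_norm_inner_self (A := A) x, Real.sq_sqrt (norm_nonneg _)]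

end RightCStarModuleLemmas

/-- If `x⟨x,y⟩` is Birkhoff–James orthogonal to `y`, then `⟨x,y⟩ = 0`. -/
theorem stmt_19 {A E : Type*} [CStarAlgebra A] [PartialOrder A] [StarOrderedRing A]
    [NormedAddCommGroup E] [NormedSpace ℂ E] [CompleteSpace E]
    [Module Aᵐᵒᵖ E] [RightCStarModule A E] (x y : E)
    (h : ∀ lam : ℂ, ‖x <• (inner A x y : A) + lam • y‖ ≥ ‖x <• (inner A x y : A)‖) :
    (inner A x y : A) = 0 := by
  by_contra hc
  set c : A := inner A x y with hcdef
  set u : E := x <• c with hudef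
  have hy : y ≠ 0 := fun hy => hc (by simp [hcdef, hy])
  have hx : x ≠ 0 := fun hx => hc (by simp [hcdef, hx])
  have huy : (inner A u y : A) = star c * c := by
    simp [hudef, RightCStarModule.inner_op_smul_left_s19, hcdef]
  have hu : u ≠ 0 := by
    intro h0
    apply hc
    have h1 : star c * c = 0 := by rw [← huy, h0]; simp
    exact CStarRing.star_mul_self_eq_zero_iff c |>.mp h1
  set a : A := inner A u u with hadef
  set b : A := inner A y y with hbdef
  have ha0 : 0 ≤ a := RightCStarModule.inner_self_nonneg
  have hb0 : 0 ≤ b := RightCStarModule.inner_self_nonneg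
  have hna : ‖a‖ = ‖u‖ ^ 2 := (RightCStarModule.norm_sq_eq_s19 (A := A)).symm
  have hnb : ‖b‖ = ‖y‖ ^ 2 := (RightCStarModule.norm_sq_eq_s19 (A := A)).symm
  set na := ‖a‖ with hna'
  set nb := ‖b‖ with hnb'
  set nx := ‖x‖ ^ 2 with hnx
  have hna0 : 0 < na := by rw [hna]; exact pow_pos (norm_pos_iff.mpr hu) 2
  have hnb0 : 0 < nb := by rw [hnb]; exact pow_pos (norm_pos_iff.mpr hy) 2
  have hnx0 : 0 < nx := pow_pos (norm_pos_iff.mpr hx) 2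
  set t := min (nx / 2) (na / (nx * nb)) with ht
  have ht0 : 0 < t := lt_min (by positivity) (by positivity)
  have ht1 : t ≤ nx / 2 := min_le_left _ _
  have ht2 : t ≤ na / (nx * nb) := min_le_right _ _
  -- the expanded inner A product
  set z : A := inner A (u - t • y) (u - t • y) with hzdef
  have hz0 : 0 ≤ z := RightCStarModule.inner_self_nonneg
  have hzexp : z = a - (2 * t) • (star c * c) + (t * t) • b := by
    rw [hzdef]
    simp only [RightCStarModule.inner_sub_right_s19, RightCStarModule.inner_sub_left_s19,
      RightCStarModule.inner_smul_right_real_s19, RightCStarModule.inner_smul_left_real_s19, huy,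
      ← hadef, ← hbdef]
    have hyu : (inner A y u : A) = star c * c := by
      rw [← RightCStarModule.star_inner, huy, star_mul, star_star]
    rw [hyu]
    module
  -- a = star c * ⟪x,x⟫ * c ≤ nx • (star c * c)
  have haeq : a = star c * (inner A x x : A) * c := by
    rw [hadef, hudef, RightCStarModule.inner_op_smul_left_s19, RightCStarModule.inner_op_smul_right,
      mul_assoc]
  have hxxle : (inner A x x : A) ≤ algebraMap ℝ A nx := by
    have h1 := IsSelfAdjoint.le_algebraMap_norm_self (a := (inner A x x : A))
      RightCStarModule.isSelfAdjoint_inner_self_s19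
    rwa [show ‖(inner A x x : A)‖ = nx from (RightCStarModule.norm_sq_eq_s19 (A := A)).symm] at h1
  have hkey : a ≤ nx • (star c * c) := by
    calc a = star c * (inner A x x : A) * c := haeq
      _ ≤ star c * algebraMap ℝ A nx * c := star_left_conjugate_le_conjugate hxxle c
      _ = nx • (star c * c) := by
          rw [Algebra.algebraMap_eq_smul_one]
          rw [mul_smul_comm, mul_one, smul_mul_assoc]
  have hfrac : (2 * t / nx) • a ≤ (2 * t) • (star c * c) := by
    have h1 := smul_le_smul_of_nonneg_left hkey (by positivity : (0:ℝ) ≤ 2 * t / nx)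
    rwa [smul_smul, div_mul_cancel₀ _ hnx0.ne'] at h1
  have hcoeff : (0:ℝ) ≤ 1 - 2 * t / nx := by
    have : 2 * t / nx ≤ 1 := by
      rw [div_le_one hnx0]
      linarith
    linarith
  have hale : a ≤ algebraMap ℝ A na :=
    IsSelfAdjoint.le_algebraMap_norm_self RightCStarModule.isSelfAdjoint_inner_self_s19
  have hble : b ≤ algebraMap ℝ A nb :=
    IsSelfAdjoint.le_algebraMap_norm_self RightCStarModule.isSelfAdjoint_inner_self_s19
  set r : ℝ := (1 - 2 * t / nx) * na + t * t * nb with hr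
  have hr0 : 0 ≤ r := by positivity
  have hzle : z ≤ algebraMap ℝ A r := by
    have step1 : z ≤ (1 - 2 * t / nx) • a + (t * t) • b := by
      rw [hzexp]
      have : a - (2 * t) • (star c * c) ≤ (1 - 2 * t / nx) • a := by
        have := sub_le_sub_left hfrac a
        calc a - (2 * t) • (star c * c) ≤ a - (2 * t / nx) • a := this
          _ = (1 - 2 * t / nx) • a := by module
      exact add_le_add this le_rfl
    refine step1.trans ?_
    have s1 : (1 - 2 * t / nx) • a ≤ (1 - 2 * t / nx) • (algebraMap ℝ A na) :=
      smul_le_smul_of_nonneg_left hale hcoeff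
    have s2 : (t * t) • b ≤ (t * t) • (algebraMap ℝ A nb) :=
      smul_le_smul_of_nonneg_left hble (by positivity)
    calc (1 - 2 * t / nx) • a + (t * t) • b
        ≤ (1 - 2 * t / nx) • (algebraMap ℝ A na) + (t * t) • (algebraMap ℝ A nb) :=
          add_le_add s1 s2
      _ = algebraMap ℝ A r := by
          rw [hr, Algebra.algebraMap_eq_smul_one, Algebra.algebraMap_eq_smul_one,
            Algebra.algebraMap_eq_smul_one]
          module
  have hznorm : ‖z‖ ≤ r := (CStarAlgebra.norm_le_iff_le_algebraMap z hr0 hz0).mpr hzle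
  -- Birkhoff-James hypothesis at lam = -t
  have hbj : ‖u‖ ≤ ‖u - t • y‖ := by
    have h1 := h (-(t : ℂ))
    rwa [neg_smul, ← sub_eq_add_neg, Complex.coe_smul] at h1
  have hfinal : na ≤ r := by
    rw [hna]
    calc ‖u‖ ^ 2 ≤ ‖u - t • y‖ ^ 2 := by
          gcongr
      _ = ‖z‖ := by rw [hzdef, RightCStarModule.norm_sq_eq_s19 (A := A)]
      _ ≤ r := hznorm
  -- derive contradiction
  have htnb : t * nb ≤ na / nx := by
    rw [le_div_iff₀ hnx0]
    calc t * nb * nx ≤ (na / (nx * nb)) * nb * nx := by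
          gcongr
      _ = na := by field_simp
  rw [hr] at hfinal
  have : 2 * t / nx * na ≤ t * t * nb := by linarith
  have h2 : t * (t * nb) ≤ t * (na / nx) := by
    exact mul_le_mul_of_nonneg_left htnb ht0.le
  have h3 : 2 * t * na / nx ≤ t * na / nx := by
    calc 2 * t * na / nx = 2 * t / nx * na := by ring
      _ ≤ t * t * nb := this
      _ = t * (t * nb) := by ring
      _ ≤ t * (na / nx) := h2
      _ = t * na / nx := by ring
  have h4 : 2 * t * na ≤ t * na := by
    have := div_le_div_iff_of_pos_right hnx0 |>.mp h3
    linarith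
  nlinarith [mul_pos ht0 hna0]
end
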